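/- arXiv:1704.04804 — 7 statements merged into one kernel-verified Lean document; each statement's English description precedes it below -/
import Mathlib

section
/- A linear stochastic operator T on the infinite-dimensional simplex S is orthogonal preserving if and only if T(e_i) ⊥ T(e_j) for all i ≠ j, where e_i denotes the standard basis vector. -/
open Function

def IsSimplexPt (x : ℕ → ℝ) : Prop := (∀ i, 0 ≤ x i) ∧ HasSum x 1

def Orth (x y : ℕ → ℝ) : Prop := Disjoint (support x) (support y)

def QSOCoef (P : ℕ → ℕ → ℕ → ℝ) : Prop :=
  (∀ i j k, 0 ≤ P i j k) ∧ (∀ i j k, P i j k = P j i k) ∧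
  (∀ i j, HasSum (fun k => P i j k) 1)

noncomputable def QSO (P : ℕ → ℕ → ℕ → ℝ) (x : ℕ → ℝ) : ℕ → ℝ :=
  fun k => ∑' i, ∑' j, P i j k * x i * x j

def IsOP (V : (ℕ → ℝ) → (ℕ → ℝ)) : Prop :=
  ∀ x y, IsSimplexPt x → IsSimplexPt y → Orth x y → Orth (V x) (V y)

def stdBasis (k : ℕ) : ℕ → ℝ := fun i => if i = k then 1 else 0

lemma tsum_std (t : ℕ → ℕ → ℝ) (k i : ℕ) :
    (∑' m, t m k * stdBasis i m) = t i k := by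
  rw [tsum_eq_single i]
  · simp [stdBasis]
  · intro m hm; simp [stdBasis, hm]

lemma simplex_std (i : ℕ) : IsSimplexPt (stdBasis i) := by
  constructor
  · intro m; by_cases h : m = i <;> simp [stdBasis, h]
  · exact hasSum_ite_eq i 1

theorem lso_op_iff_basis (t : ℕ → ℕ → ℝ) (ht0 : ∀ i j, 0 ≤ t i j)
    (ht1 : ∀ i, HasSum (t i) 1) :
    IsOP (fun x k => ∑' i, t i k * x i) ↔
      ∀ i j : ℕ, i ≠ j →
        Orth (fun k => ∑' m, t m k * stdBasis i m)
             (fun k => ∑' m, t m k * stdBasis j m) := by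
  constructor
  · intro hOP i j hij
    refine hOP (stdBasis i) (stdBasis j) (simplex_std i) (simplex_std j) ?_
    rw [Orth, Set.disjoint_left]
    intro m hm hm'
    simp only [mem_support, stdBasis, ne_eq, ite_eq_right_iff, not_forall] at hm hm'
    exact hij (hm.1 ▸ hm'.1 ▸ rfl)
  · intro h x y hx hy hxy
    rw [Orth, Set.disjoint_left]
    intro k hk hk'
    simp only [mem_support] at hk hk'
    obtain ⟨i, hi⟩ : ∃ i, t i k * x i ≠ 0 := by
      by_contra h'; push_neg at h'
      exact hk (by rw [tsum_congr h', tsum_zero])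
    obtain ⟨j, hj⟩ : ∃ j, t j k * y j ≠ 0 := by
      by_contra h'; push_neg at h'
      exact hk' (by rw [tsum_congr h', tsum_zero])
    have hix : x i ≠ 0 := fun h0 => hi (by simp [h0])
    have hjy : y j ≠ 0 := fun h0 => hj (by simp [h0])
    have hij : i ≠ j := fun he => Set.disjoint_left.1 hxy hix (he ▸ hjy)
    have hti : t i k ≠ 0 := fun h0 => hi (by simp [h0])
    have htj : t j k ≠ 0 := fun h0 => hj (by simp [h0])
    have hk1 : k ∈ support (fun k => ∑' m, t m k * stdBasis i m) := by
      simpa [mem_support, tsum_std] using hti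
    have hk2 : k ∈ support (fun k => ∑' m, t m k * stdBasis j m) := by
      simpa [mem_support, tsum_std] using htj
    exact Set.disjoint_left.1 (h i j hij) hk1 hk2
end

section
/- A linear stochastic operator T given by stochastic matrix (t_{ij}) is orthogonal preserving if and only if the rows t_i = (t_{ik})_k and t_j = (t_{jk})_k are orthogonal (have disjoint supports) for all i ≠ j. -/
open Function

/-! The basis vectors `stdBasis i` are pairwise orthogonal simplex points that `T` maps to the
rows `t i`, which gives necessity. Conversely, `T x` is supported in the union of the supports
of the rows `t i` with `x i ≠ 0`, so orthogonal `x`, `y` use disjoint sets of rows. -/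

theorem isSimplexPt_stdBasis (k : ℕ) : IsSimplexPt (stdBasis k) :=
  ⟨fun i => by unfold stdBasis; positivity, hasSum_ite_eq k 1⟩

theorem orth_stdBasis {i j : ℕ} (hij : i ≠ j) : Orth (stdBasis i) (stdBasis j) := by
  rw [Orth, Set.disjoint_left]
  intro a hi hj
  simp only [mem_support, stdBasis, ne_eq, ite_eq_right_iff, not_forall] at hi hj
  exact hij (hi.1.symm.trans hj.1)

theorem tsum_mul_stdBasis (f : ℕ → ℝ) (i : ℕ) : ∑' m, f m * stdBasis i m = f i := by
  rw [tsum_eq_single i fun m hm => by simp [stdBasis, hm]]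
  simp [stdBasis]

theorem exists_ne_zero_of_tsum_ne_zero {α β : Type*} [AddCommMonoid α] [TopologicalSpace α]
    {f : β → α} (h : ∑' b, f b ≠ 0) : ∃ b, f b ≠ 0 := by
  contrapose! h
  simp [funext h]

theorem support_tsum_mul_subset {ι κ R : Type*} [NonUnitalNonAssocSemiring R]
    [TopologicalSpace R] (t : ι → κ → R) (x : ι → R) :
    support (fun k => ∑' i, t i k * x i) ⊆ ⋃ i ∈ support x, support (t i) := by
  intro k hk
  obtain ⟨i, hi⟩ := exists_ne_zero_of_tsum_ne_zero hk
  exact Set.mem_biUnion (right_ne_zero_of_mul hi) (left_ne_zero_of_mul hi)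

theorem orth_tsum_mul_of_orth_rows {t : ℕ → ℕ → ℝ} (ht : ∀ i j, i ≠ j → Orth (t i) (t j))
    {x y : ℕ → ℝ} (hxy : Orth x y) :
    Orth (fun k => ∑' i, t i k * x i) (fun k => ∑' i, t i k * y i) := by
  refine Disjoint.mono (support_tsum_mul_subset t x) (support_tsum_mul_subset t y) ?_
  refine Set.disjoint_iUnion₂_left.mpr fun i hi => Set.disjoint_iUnion₂_right.mpr fun j hj => ?_
  exact ht i j fun h => Set.disjoint_left.mp hxy hi (h ▸ hj)

theorem lso_op_iff_rows_general (t : ℕ → ℕ → ℝ) :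
    IsOP (fun x k => ∑' i, t i k * x i) ↔
      ∀ i j : ℕ, i ≠ j → Orth (t i) (t j) := by
  refine ⟨fun hop i j hij => ?_, fun hrows _ _ _ _ hxy => orth_tsum_mul_of_orth_rows hrows hxy⟩
  simpa only [tsum_mul_stdBasis] using
    hop _ _ (isSimplexPt_stdBasis i) (isSimplexPt_stdBasis j) (orth_stdBasis hij)

theorem lso_op_iff_rows (t : ℕ → ℕ → ℝ) (ht0 : ∀ i j, 0 ≤ t i j)
    (ht1 : ∀ i, HasSum (t i) 1) :
    IsOP (fun x k => ∑' i, t i k * x i) ↔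
      ∀ i j : ℕ, i ≠ j → Orth (t i) (t j) :=
  lso_op_iff_rows_general t
end

section
/- Let V be a quadratic stochastic operator on the infinite-dimensional simplex S with coefficients P_{ij,k}, and for each i,j let P_ij denote the element (P_{ij,k})_{k ∈ ℕ} of S. Then V is orthogonal preserving if and only if for any disjoint subsets A, B ⊆ ℕ one has P_ij ⊥ P_uv for all i,j ∈ A and u,v ∈ B. -/
open Function

-- auxiliary lemmas

lemma coef_le_one (Pc : ℕ → ℕ → ℕ → ℝ) (hP : QSOCoef Pc) (i j k : ℕ) : Pc i j k ≤ 1 :=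
  le_hasSum (hP.2.2 i j) k (fun m _ => hP.1 i j m)

lemma inner_summable (Pc : ℕ → ℕ → ℕ → ℝ) (hP : QSOCoef Pc) (x : ℕ → ℝ)
    (hx : IsSimplexPt x) (i k : ℕ) :
    Summable (fun j => Pc i j k * x i * x j) := by
  refine Summable.of_nonneg_of_le
    (fun j => mul_nonneg (mul_nonneg (hP.1 i j k) (hx.1 i)) (hx.1 j))
    (fun j => ?_) ((hx.2.summable.mul_left (x i)))
  have h1 := coef_le_one Pc hP i j k
  have h0 := hP.1 i j k
  nlinarith [mul_nonneg (hx.1 i) (hx.1 j)]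

lemma inner_le (Pc : ℕ → ℕ → ℕ → ℝ) (hP : QSOCoef Pc) (x : ℕ → ℝ)
    (hx : IsSimplexPt x) (i k : ℕ) :
    (∑' j, Pc i j k * x i * x j) ≤ x i := by
  have h : (∑' j, Pc i j k * x i * x j) ≤ ∑' j, x i * x j := by
    refine Summable.tsum_le_tsum (fun j => ?_) (inner_summable Pc hP x hx i k)
      (hx.2.summable.mul_left (x i))
    have h1 := coef_le_one Pc hP i j k
    have h0 := hP.1 i j k
    nlinarith [mul_nonneg (hx.1 i) (hx.1 j)]
  rwa [tsum_mul_left, hx.2.tsum_eq, mul_one] at h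

lemma outer_summable (Pc : ℕ → ℕ → ℕ → ℝ) (hP : QSOCoef Pc) (x : ℕ → ℝ)
    (hx : IsSimplexPt x) (k : ℕ) :
    Summable (fun i => ∑' j, Pc i j k * x i * x j) := by
  refine Summable.of_nonneg_of_le
    (fun i => tsum_nonneg (fun j => mul_nonneg (mul_nonneg (hP.1 i j k) (hx.1 i)) (hx.1 j)))
    (fun i => inner_le Pc hP x hx i k) hx.2.summable

lemma qso_pos (Pc : ℕ → ℕ → ℕ → ℝ) (hP : QSOCoef Pc) (x : ℕ → ℝ)
    (hx : IsSimplexPt x) {i j k : ℕ} (hij : 0 < Pc i j k) (hi : 0 < x i) (hj : 0 < x j) :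
    0 < QSO Pc x k := by
  refine Summable.tsum_pos (outer_summable Pc hP x hx k)
    (fun a => tsum_nonneg (fun b => mul_nonneg (mul_nonneg (hP.1 a b k) (hx.1 a)) (hx.1 b))) i ?_
  refine Summable.tsum_pos (inner_summable Pc hP x hx i k)
    (fun b => mul_nonneg (mul_nonneg (hP.1 i b k) (hx.1 i)) (hx.1 b)) j ?_
  positivity

lemma qso_ne_zero (Pc : ℕ → ℕ → ℕ → ℝ) (x : ℕ → ℝ) {k : ℕ}
    (h : QSO Pc x k ≠ 0) : ∃ i j, x i ≠ 0 ∧ x j ≠ 0 ∧ Pc i j k ≠ 0 := by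
  by_contra hc
  push_neg at hc
  apply h
  have : ∀ i j, Pc i j k * x i * x j = 0 := by
    intro i j
    by_cases hxi : x i = 0
    · simp [hxi]
    by_cases hxj : x j = 0
    · simp [hxj]
    · simp [hc i j hxi hxj]
  simp only [QSO, this, tsum_zero]

theorem op_iff_coef_orth (Pc : ℕ → ℕ → ℕ → ℝ) (hP : QSOCoef Pc) :
    IsOP (QSO Pc) ↔
      ∀ A B : Set ℕ, Disjoint A B →
        ∀ i ∈ A, ∀ j ∈ A, ∀ u ∈ B, ∀ v ∈ B,
          Orth (fun k => Pc i j k) (fun k => Pc u v k) := by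
  constructor
  · intro hOP A B hAB i hi j hj u hu v hv
    set x : ℕ → ℝ := fun a => ((if a = i then 1 else 0) + (if a = j then 1 else 0)) / 2 with hxdef
    set y : ℕ → ℝ := fun a => ((if a = u then 1 else 0) + (if a = v then 1 else 0)) / 2 with hydef
    have hx : IsSimplexPt x := by
      constructor
      · intro a; simp only [hxdef]; split_ifs <;> norm_num
      · have h := ((hasSum_ite_eq i (1:ℝ)).add (hasSum_ite_eq j (1:ℝ))).div_const 2
        norm_num at h; exact h
    have hy : IsSimplexPt y := by
      constructor
      · intro a; simp only [hydef]; split_ifs <;> norm_num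
      · have h := ((hasSum_ite_eq u (1:ℝ)).add (hasSum_ite_eq v (1:ℝ))).div_const 2
        norm_num at h; exact h
    have hsx : ∀ a, x a ≠ 0 → a ∈ A := by
      intro a ha
      simp only [hxdef] at ha
      rcases eq_or_ne a i with rfl | h1
      · exact hi
      rcases eq_or_ne a j with rfl | h2
      · exact hj
      · simp [h1, h2] at ha
    have hsy : ∀ a, y a ≠ 0 → a ∈ B := by
      intro a ha
      simp only [hydef] at ha
      rcases eq_or_ne a u with rfl | h1
      · exact hu
      rcases eq_or_ne a v with rfl | h2
      · exact hv
      · simp [h1, h2] at ha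
    have hxy : Orth x y := by
      rw [Orth, Set.disjoint_left]
      intro a hax hay
      exact Set.disjoint_left.mp hAB (hsx a hax) (hsy a hay)
    have hV := hOP x y hx hy hxy
    rw [Orth, Set.disjoint_left]
    intro k hk hk'
    simp only [mem_support] at hk hk'
    have hxi : 0 < x i := by
      have h0 : (0:ℝ) ≤ (if i = j then (1:ℝ) else 0) := by split_ifs <;> norm_num
      show 0 < ((if i = i then (1:ℝ) else 0) + if i = j then 1 else 0) / 2
      rw [if_pos rfl]; linarith
    have hxj : 0 < x j := by
      have h0 : (0:ℝ) ≤ (if j = i then (1:ℝ) else 0) := by split_ifs <;> norm_num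
      show 0 < ((if j = i then (1:ℝ) else 0) + if j = j then 1 else 0) / 2
      rw [if_pos (rfl : j = j)]
      linarith
    have hyu : 0 < y u := by
      have h0 : (0:ℝ) ≤ (if u = v then (1:ℝ) else 0) := by split_ifs <;> norm_num
      show 0 < ((if u = u then (1:ℝ) else 0) + if u = v then 1 else 0) / 2
      rw [if_pos rfl]; linarith
    have hyv : 0 < y v := by
      have h0 : (0:ℝ) ≤ (if v = u then (1:ℝ) else 0) := by split_ifs <;> norm_num
      show 0 < ((if v = u then (1:ℝ) else 0) + if v = v then 1 else 0) / 2
      rw [if_pos (rfl : v = v)]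
      linarith
    have hVx : 0 < QSO Pc x k :=
      qso_pos Pc hP x hx (lt_of_le_of_ne (hP.1 i j k) (Ne.symm hk)) hxi hxj
    have hVy : 0 < QSO Pc y k :=
      qso_pos Pc hP y hy (lt_of_le_of_ne (hP.1 u v k) (Ne.symm hk')) hyu hyv
    exact Set.disjoint_left.mp hV (mem_support.mpr hVx.ne') (mem_support.mpr hVy.ne')
  · intro h x y hx hy hxy
    rw [Orth, Set.disjoint_left]
    intro k hk hk'
    simp only [mem_support] at hk hk'
    obtain ⟨i, j, hxi, hxj, hij⟩ := qso_ne_zero Pc x hk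
    obtain ⟨u, v, hyu, hyv, huv⟩ := qso_ne_zero Pc y hk'
    have horth := h (support x) (support y) hxy i (mem_support.mpr hxi)
      j (mem_support.mpr hxj) u (mem_support.mpr hyu) v (mem_support.mpr hyv)
    exact Set.disjoint_left.mp horth (mem_support.mpr hij) (mem_support.mpr huv)
end

section
/- Let {F_k}_{k=1}^∞ be a pairwise orthogonal family in the infinite-dimensional simplex S. Then {F_k} is total (every x ∈ S is a convex series combination x = ∑_i λ_i F_i with λ_i ≥ 0, ∑ λ_i = 1) if and only if every F_k has support of cardinality 1 and ⋃_k supp(F_k) = ℕ. -/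
open Function

def IsTotalFam (F : ℕ → ℕ → ℝ) : Prop :=
  ∀ x : ℕ → ℝ, IsSimplexPt x →
    ∃ l : ℕ → ℝ, (∀ i, 0 ≤ l i) ∧ HasSum l 1 ∧
      ∀ m, HasSum (fun i => l i * F i m) (x m)

lemma stdBasis_simplex (m : ℕ) : IsSimplexPt (stdBasis m) :=
  ⟨fun i => by unfold stdBasis; positivity, hasSum_ite_eq m 1⟩

theorem total_iff_singleton_supports (F : ℕ → ℕ → ℝ)
    (hF : ∀ k, IsSimplexPt (F k))
    (horth : ∀ i j : ℕ, i ≠ j → Orth (F i) (F j)) :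
    IsTotalFam F ↔
      (∀ k, ∃ i, support (F k) = {i}) ∧ (⋃ k, support (F k)) = Set.univ := by
  constructor
  · intro htot
    constructor
    · intro k
      obtain ⟨m, hm⟩ : ∃ m, F k m ≠ 0 := by
        by_contra h
        push_neg at h
        have h2 : HasSum (F k) 0 := by
          have : F k = 0 := funext h
          rw [this]; exact hasSum_zero
        exact one_ne_zero ((hF k).2.unique h2)
      refine ⟨m, ?_⟩
      ext n
      simp only [Set.mem_singleton_iff, mem_support]
      constructor
      · intro hn
        by_contra hne
        obtain ⟨l, hl0, hl1, hlsum⟩ := htot (stdBasis m) (stdBasis_simplex m)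
        have h0 : HasSum (fun i => l i * F i n) 0 := by
          have := hlsum n
          simpa [stdBasis, hne] using this
        have hnn : ∀ i, 0 ≤ l i * F i n := fun i => mul_nonneg (hl0 i) ((hF i).1 n)
        have hall : (fun i => l i * F i n) = 0 :=
          (hasSum_zero_iff_of_nonneg hnn).mp h0
        have hlk0 : l k = 0 := by
          have := congrFun hall k
          simp only [Pi.zero_apply] at this
          rcases mul_eq_zero.mp this with h | h
          · exact h
          · exact absurd h hn
        have h1 : HasSum (fun i => l i * F i m) 1 := by
          have := hlsum m
          simpa [stdBasis] using this
        have hsingle : HasSum (fun i => l i * F i m) (l k * F k m) := by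
          apply hasSum_single k
          intro i hik
          have hFim : F i m = 0 := by
            by_contra hFim
            exact (Set.disjoint_left.mp (horth i k hik) hFim) hm
          simp [hFim]
        have := h1.unique hsingle
        rw [hlk0, zero_mul] at this
        exact one_ne_zero this
      · intro hn; subst hn; exact hm
    · ext m
      simp only [Set.mem_iUnion, mem_support, Set.mem_univ, iff_true]
      obtain ⟨l, hl0, hl1, hlsum⟩ := htot (stdBasis m) (stdBasis_simplex m)
      have h1 : HasSum (fun i => l i * F i m) 1 := by
        have := hlsum m
        simpa [stdBasis] using this
      by_contra h
      push_neg at h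
      have h0 : HasSum (fun i => l i * F i m) 0 := by
        have : (fun i => l i * F i m) = 0 := funext fun i => by simp [h i]
        rw [this]; exact hasSum_zero
      exact one_ne_zero (h1.unique h0)
  · rintro ⟨hsing, huniv⟩
    choose σ hσ using hsing
    have hzero : ∀ k i, i ≠ σ k → F k i = 0 := by
      intro k i hi
      by_contra h
      have : i ∈ support (F k) := h
      rw [hσ k] at this
      exact hi this
    have hone : ∀ k, F k (σ k) = 1 := by
      intro k
      have h1 : HasSum (F k) (F k (σ k)) :=
        hasSum_single (σ k) (fun j hj => hzero k j hj)
      exact (h1.unique (hF k).2)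
    have hinj : Function.Injective σ := by
      intro i j hij
      by_contra hne
      have hd := horth i j hne
      unfold Orth at hd
      rw [hσ i, hσ j, hij] at hd
      exact (Set.disjoint_left.mp hd rfl) rfl
    have hsurj : Function.Surjective σ := by
      intro m
      have : m ∈ (⋃ k, support (F k)) := huniv ▸ Set.mem_univ m
      obtain ⟨k, hk⟩ := Set.mem_iUnion.mp this
      rw [hσ k] at hk
      exact ⟨k, hk.symm⟩
    let e : ℕ ≃ ℕ := Equiv.ofBijective σ ⟨hinj, hsurj⟩
    intro x hx
    refine ⟨fun i => x (σ i), fun i => hx.1 (σ i), ?_, ?_⟩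
    · exact e.hasSum_iff.mpr hx.2
    · intro m
      have hkey : HasSum (fun i => x (σ i) * F i m)
          (x (σ (e.symm m)) * F (e.symm m) m) := by
        apply hasSum_single (e.symm m)
        intro i hi
        have : m ≠ σ i := by
          intro h
          apply hi
          have : σ (e.symm m) = m := e.apply_symm_apply m
          exact hinj (by rw [this, h])
        rw [hzero i m this, mul_zero]
      have hm : σ (e.symm m) = m := e.apply_symm_apply m
      rw [hm] at hkey
      have : F (e.symm m) m = 1 := by have h := hone (e.symm m); rwa [hm] at h
      rwa [this, mul_one] at hkey
end

section
/- Let V be an orthogonal preserving quadratic stochastic operator on S with V(e_k) = F_k for an orthogonal system {F_k}. Then for every k and every m ∈ supp(F_k), one has P_{ij,m} = 0 whenever i ≠ k and j ≠ k. -/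
open Function

theorem op_offdiag_vanish (Pc : ℕ → ℕ → ℕ → ℝ) (F : ℕ → ℕ → ℝ)
    (hP : QSOCoef Pc) (hF : ∀ k, IsSimplexPt (F k))
    (horth : ∀ i j : ℕ, i ≠ j → Orth (F i) (F j))
    (hOP : IsOP (QSO Pc))
    (hVe : ∀ k, QSO Pc (stdBasis k) = F k) :
    ∀ k m : ℕ, m ∈ support (F k) →
      ∀ i j : ℕ, i ≠ k → j ≠ k → Pc i j m = 0 := by
  intro k m hm i j hik hjk
  obtain ⟨hPnn, hPsym, hPsum⟩ := hP
  set x : ℕ → ℝ := fun a => (if a = i then (1/2 : ℝ) else 0) + (if a = j then (1/2 : ℝ) else 0)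
    with hxdef
  have hxnn : ∀ a, 0 ≤ x a := by
    intro a; dsimp [x]; positivity
  have hxi : (0:ℝ) < x i := by
    have : (1/2:ℝ) ≤ x i := by
      dsimp [x]
      rcases eq_or_ne i j with rfl | h
      · norm_num
      · simp [h]
    exact lt_of_lt_of_le (by norm_num) this
  have hxj : (0:ℝ) < x j := by
    have : (1/2:ℝ) ≤ x j := by
      dsimp [x]
      rcases eq_or_ne j i with rfl | h
      · norm_num
      · simp [h]
    exact lt_of_lt_of_le (by norm_num) this
  have hxsupp : ∀ a, a ≠ i → a ≠ j → x a = 0 := by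
    intro a ha hb; dsimp [x]; rw [if_neg ha, if_neg hb]; ring
  have hxsp : IsSimplexPt x := by
    refine ⟨hxnn, ?_⟩
    have h1 : HasSum (fun a => if a = i then (1/2:ℝ) else 0) (1/2) := hasSum_ite_eq i _
    have h2 : HasSum (fun a => if a = j then (1/2:ℝ) else 0) (1/2) := hasSum_ite_eq j _
    have := h1.add h2
    norm_num at this
    exact this
  have hksp : IsSimplexPt (stdBasis k) := by
    refine ⟨?_, ?_⟩
    · intro a; unfold stdBasis; positivity
    · exact hasSum_ite_eq k 1
  have hxk : Orth x (stdBasis k) := by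
    rw [Orth, Set.disjoint_left]
    intro a ha hb
    have hak : a = k := by
      by_contra h
      exact hb (by simp [stdBasis, h])
    rcases eq_or_ne a i with rfl | hai
    · exact hik hak
    rcases eq_or_ne a j with rfl | haj
    · exact hjk hak
    exact ha (hxsupp a hai haj)
  have horthV : Orth (QSO Pc x) (F k) := by
    have := hOP x (stdBasis k) hxsp hksp hxk
    rwa [hVe k] at this
  have hVxm : QSO Pc x m = 0 := by
    rw [Orth, Set.disjoint_right] at horthV
    have := horthV hm
    simpa using this
  -- inner sums
  set g : ℕ → ℝ := fun a => ∑' b, Pc a b m * x a * x b with hgdef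
  have hterm_nn : ∀ a b, 0 ≤ Pc a b m * x a * x b := by
    intro a b; exact mul_nonneg (mul_nonneg (hPnn _ _ _) (hxnn _)) (hxnn _)
  have hg_nn : ∀ a, 0 ≤ g a := fun a => tsum_nonneg (fun b => hterm_nn a b)
  have hg_supp : ∀ a ∉ ({i, j} : Finset ℕ), g a = 0 := by
    intro a ha
    simp only [Finset.mem_insert, Finset.mem_singleton, not_or] at ha
    have hxa : x a = 0 := hxsupp a ha.1 ha.2
    dsimp [g]
    simp [hxa]
  have hg_summable : Summable g := summable_of_ne_finset_zero hg_supp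
  have hgi0 : g i = 0 := by
    have hle : g i ≤ ∑' a, g a := Summable.le_tsum hg_summable i (fun b _ => hg_nn b)
    have : (∑' a, g a) = 0 := hVxm
    have := hle.trans_eq this
    linarith [hg_nn i]
  -- inner sum at a = i
  set f : ℕ → ℝ := fun b => Pc i b m * x i * x b with hfdef
  have hf_supp : ∀ b ∉ ({i, j} : Finset ℕ), f b = 0 := by
    intro b hb
    simp only [Finset.mem_insert, Finset.mem_singleton, not_or] at hb
    have : x b = 0 := hxsupp b hb.1 hb.2
    dsimp [f]; rw [this]; ring
  have hf_summable : Summable f := summable_of_ne_finset_zero hf_supp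
  have hfj0 : f j = 0 := by
    have hle : f j ≤ ∑' b, f b := Summable.le_tsum hf_summable j (fun b _ => hterm_nn i b)
    have : (∑' b, f b) = 0 := hgi0
    have h2 := hle.trans_eq this
    have h0 : (0:ℝ) ≤ f j := hterm_nn i j
    linarith
  dsimp [f] at hfj0
  have hxij : (0:ℝ) < x i * x j := mul_pos hxi hxj
  by_contra h
  have := mul_ne_zero (mul_ne_zero h hxi.ne') hxj.ne'
  exact this (by linarith [hfj0])
end

section
/- Let V be an orthogonal preserving QSO on S with V(e_k) = F_k for an orthogonal system {F_k}, and let C = ℕ \ ⋃_k supp(F_k). Then P_{kk,c} = 0 for every k ∈ ℕ and c ∈ C, and hence for every x ∈ S and c ∈ C, V(x)_c = 2 ∑_{j} ∑_{i > j} P_{ij,c} x_i x_j. -/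
open Function

theorem op_outside_support (Pc : ℕ → ℕ → ℕ → ℝ) (F : ℕ → ℕ → ℝ)
    (hP : QSOCoef Pc) (hF : ∀ k, IsSimplexPt (F k))
    (horth : ∀ i j : ℕ, i ≠ j → Orth (F i) (F j))
    (hOP : IsOP (QSO Pc))
    (hVe : ∀ k, QSO Pc (stdBasis k) = F k) :
    (∀ k c : ℕ, c ∈ Set.univ \ (⋃ k', support (F k')) → Pc k k c = 0) ∧
    (∀ x : ℕ → ℝ, IsSimplexPt x →
      ∀ c ∈ Set.univ \ (⋃ k', support (F k')),
        QSO Pc x c = 2 * ∑' j, ∑' i, (if j < i then Pc i j c * x i * x j else 0)) := by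
  have hdiag0 : ∀ k c : ℕ, c ∈ Set.univ \ (⋃ k', support (F k')) → Pc k k c = 0 := by
    intro k c hc
    have hFc : F k c = 0 := by
      have h2 := hc.2
      simp only [Set.mem_iUnion, not_exists] at h2
      have := h2 k
      simpa [mem_support, not_not] using this
    have hq : QSO Pc (stdBasis k) c = Pc k k c := by
      show (∑' i, ∑' j, Pc i j c * stdBasis k i * stdBasis k j) = Pc k k c
      have hinner : ∀ i, (∑' j, Pc i j c * stdBasis k i * stdBasis k j)
          = if i = k then Pc k k c else 0 := by
        intro i
        by_cases hi : i = k
        · subst hi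
          rw [if_pos rfl]
          rw [tsum_eq_single i (by intro j hj; simp [stdBasis, hj])]
          simp [stdBasis]
        · rw [if_neg hi]
          simp [stdBasis, hi]
      rw [tsum_congr hinner, tsum_ite_eq]
    rw [hVe k] at hq
    rw [← hq, hFc]
  refine ⟨hdiag0, ?_⟩
  intro x hx c hc
  have hP0 := hP.1
  have hPsym := hP.2.1
  have hPle1 : ∀ i j, Pc i j c ≤ 1 := fun i j =>
    le_hasSum (hP.2.2 i j) c (fun k _ => hP.1 i j k)
  set f : ℕ × ℕ → ℝ := fun p => Pc p.1 p.2 c * x p.1 * x p.2 with hfdef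
  have hxs : Summable x := hx.2.summable
  have hxnn := hx.1
  have hfnn : ∀ p, 0 ≤ f p := fun p =>
    mul_nonneg (mul_nonneg (hP0 _ _ _) (hxnn _)) (hxnn _)
  have hprod : Summable (fun p : ℕ × ℕ => x p.1 * x p.2) :=
    hxs.mul_of_nonneg hxs hxnn hxnn
  have hfs : Summable f := by
    refine Summable.of_nonneg_of_le hfnn (fun p => ?_) hprod
    show Pc p.1 p.2 c * x p.1 * x p.2 ≤ x p.1 * x p.2
    calc Pc p.1 p.2 c * x p.1 * x p.2 ≤ 1 * x p.1 * x p.2 :=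
          mul_le_mul_of_nonneg_right
            (mul_le_mul_of_nonneg_right (hPle1 _ _) (hxnn _)) (hxnn _)
      _ = x p.1 * x p.2 := by ring
  have hdiag : ∀ i, f (i, i) = 0 := by
    intro i
    simp [hfdef, hdiag0 i c hc]
  set fU : ℕ × ℕ → ℝ := fun p => if p.2 < p.1 then f p else 0 with hfU
  set fL : ℕ × ℕ → ℝ := fun p => if p.1 < p.2 then f p else 0 with hfL
  have hfUs : Summable fU := by
    refine Summable.of_nonneg_of_le (fun p => ?_) (fun p => ?_) hfs
    · simp only [hfU]; split <;> [exact hfnn p; exact le_rfl]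
    · simp only [hfU]; split <;> [exact le_rfl; exact hfnn p]
  have hfLs : Summable fL := by
    refine Summable.of_nonneg_of_le (fun p => ?_) (fun p => ?_) hfs
    · simp only [hfL]; split <;> [exact hfnn p; exact le_rfl]
    · simp only [hfL]; split <;> [exact le_rfl; exact hfnn p]
  have hsplit : ∀ p, f p = fU p + fL p := by
    rintro ⟨a, b⟩
    rcases lt_trichotomy b a with h | h | h
    · simp [hfU, hfL, h, not_lt.mpr h.le]
    · subst h
      simp [hfU, hfL, hdiag]
    · simp [hfU, hfL, h, not_lt.mpr h.le]
  have hswap : ∀ p : ℕ × ℕ, fL p = fU ((Equiv.prodComm ℕ ℕ) p) := by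
    rintro ⟨a, b⟩
    simp only [hfU, hfL, Equiv.prodComm_apply, Prod.swap_prod_mk]
    by_cases h : a < b
    · rw [if_pos h, if_pos h]
      show Pc a b c * x a * x b = Pc b a c * x b * x a
      rw [hPsym a b c]; ring
    · rw [if_neg h, if_neg h]
  have hLU : ∑' p, fL p = ∑' p, fU p := by
    rw [tsum_congr hswap, (Equiv.prodComm ℕ ℕ).tsum_eq fU]
  have htot : ∑' p, f p = 2 * ∑' p, fU p := by
    rw [tsum_congr hsplit, Summable.tsum_add hfUs hfLs, hLU]; ring
  have hLHS : QSO Pc x c = ∑' p, f p := by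
    show (∑' i, ∑' j, Pc i j c * x i * x j) = ∑' p, f p
    rw [Summable.tsum_prod' hfs hfs.prod_factor]
  have hRHS : (∑' j, ∑' i, (if j < i then Pc i j c * x i * x j else 0))
      = ∑' p, fU p := by
    have hgs : Summable (fU ∘ (Equiv.prodComm ℕ ℕ)) :=
      ((Equiv.prodComm ℕ ℕ).summable_iff).mpr hfUs
    have h1 : (∑' j, ∑' i, (if j < i then Pc i j c * x i * x j else 0))
        = ∑' q : ℕ × ℕ, (fU ∘ (Equiv.prodComm ℕ ℕ)) q := by
      rw [Summable.tsum_prod' hgs hgs.prod_factor]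
      rfl
    rw [h1]
    exact (Equiv.prodComm ℕ ℕ).tsum_eq fU
  rw [hLHS, htot, hRHS]
end

section
/- Let V be a QSO on the infinite-dimensional simplex S and let x₀ ∈ S with supp(x₀) = α ⊆ C, where C = ℕ \ ⋃_k supp(V(e_k)) and x₀ has at least two support points with all coordinates in α positive. If P_{ii,c} = 0 for all i ∈ ℕ and c ∈ C, then ∑_{k ∈ α} V(x₀)_k < 1; in particular x₀ is not a fixed point of V. -/
open Function
open scoped ENNReal

/-!
Since `P_{ii,c} = 0` for `c ∈ C ⊇ α`, the mass that `V x` puts on `α` comes only from pairs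
`i ≠ j`, so it is at most `∑_{i ≠ j} x_i x_j = ∑_i x_i (1 - x_i) = 1 - ∑_i x_i²`, which is
`< 1` as soon as some `x_i > 0`. The infinite double and triple sums are rearranged in `ℝ≥0∞`,
where no summability bookkeeping is needed.
-/

namespace ENNReal

variable {ι : Type*} {X : ι → ℝ≥0∞}

theorem ne_top_of_tsum_eq_one (hX : ∑' i, X i = 1) (i : ι) : X i ≠ ∞ :=
  ne_top_of_le_ne_top one_ne_top (hX ▸ ENNReal.le_tsum i)

theorem tsum_ite_eq_one_sub [DecidableEq ι] (hX : ∑' j, X j = 1) (i : ι) :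
    ∑' j, (if j = i then 0 else X j) = 1 - X i := by
  refine ENNReal.eq_sub_of_add_eq (ne_top_of_tsum_eq_one hX i) ?_
  rw [add_comm, ← hX]
  convert (ENNReal.tsum_eq_add_tsum_ite i).symm

theorem tsum_mul_one_sub_lt_one (hX : ∑' i, X i = 1) {i₀ : ι} (hi₀ : X i₀ ≠ 0) :
    ∑' i, X i * (1 - X i) < 1 := by
  have hle : ∀ i, X i * (1 - X i) ≤ X i := fun i =>
    mul_le_of_le_one_right' tsub_le_self
  have hlt : X i₀ * (1 - X i₀) < X i₀ := by
    simpa [mul_comm] using ENNReal.mul_lt_mul_left hi₀ (ne_top_of_tsum_eq_one hX i₀)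
      (ENNReal.sub_lt_self one_ne_top one_ne_zero hi₀)
  calc ∑' i, X i * (1 - X i)
      < ∑' i, X i := ENNReal.tsum_lt_tsum
        (ne_top_of_le_ne_top one_ne_top ((ENNReal.tsum_le_tsum hle).trans hX.le)) hle hlt
    _ = 1 := hX

theorem tsum_toReal_lt_one {f : ι → ℝ≥0∞} (hf : ∑' k, f k < 1) : ∑' k, (f k).toReal < 1 := by
  have hfin : ∀ k, f k ≠ ∞ := fun k =>
    ne_top_of_le_ne_top one_ne_top ((ENNReal.le_tsum k).trans hf.le)
  rw [← ENNReal.tsum_toReal_eq hfin]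
  exact ENNReal.toReal_lt_of_lt_ofReal (by simpa using hf)

end ENNReal

noncomputable def ennQSO (p : ℕ → ℕ → ℕ → ℝ≥0∞) (X : ℕ → ℝ≥0∞) (k : ℕ) : ℝ≥0∞ :=
  ∑' i, ∑' j, p i j k * X i * X j

section ennQSO

variable {p : ℕ → ℕ → ℕ → ℝ≥0∞} {X : ℕ → ℝ≥0∞}

theorem ennQSO_eq_tsum_offDiag {k : ℕ} (hdiag : ∀ i, p i i k = 0) :
    ennQSO p X k = ∑' i, ∑' j, if j = i then 0 else p i j k * X i * X j := by
  refine tsum_congr fun i => tsum_congr fun j => ?_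
  split_ifs with hji
  · simp [hji, hdiag]
  · rfl

theorem tsum_tsum_offDiag (hp : ∀ i j, ∑' k, p i j k = 1) (hX : ∑' i, X i = 1) :
    ∑' k, ∑' i, ∑' j, (if j = i then 0 else p i j k * X i * X j) = ∑' i, X i * (1 - X i) := by
  have hk : ∀ i j, ∑' k, (if j = i then 0 else p i j k * X i * X j) =
      X i * if j = i then 0 else X j := fun i j => by
    split_ifs
    · simp
    · rw [ENNReal.tsum_mul_right, ENNReal.tsum_mul_right, hp, one_mul]
  rw [ENNReal.tsum_comm]
  refine tsum_congr fun i => ?_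
  rw [ENNReal.tsum_comm]
  simp only [hk, ENNReal.tsum_mul_left, ENNReal.tsum_ite_eq_one_sub hX]

theorem tsum_indicator_ennQSO_lt_one (hp : ∀ i j, ∑' k, p i j k = 1) (hX : ∑' i, X i = 1)
    {A : Set ℕ} (hdiag : ∀ i, ∀ k ∈ A, p i i k = 0) {i₀ : ℕ} (hi₀ : X i₀ ≠ 0) :
    ∑' k, A.indicator (ennQSO p X) k < 1 :=
  calc ∑' k, A.indicator (ennQSO p X) k
      ≤ ∑' k, ∑' i, ∑' j, (if j = i then 0 else p i j k * X i * X j) := by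
        refine ENNReal.tsum_le_tsum fun k => ?_
        by_cases hk : k ∈ A
        · rw [Set.indicator_of_mem hk, ennQSO_eq_tsum_offDiag fun i => hdiag i k hk]
        · rw [Set.indicator_of_notMem hk]
          exact zero_le
    _ = ∑' i, X i * (1 - X i) := tsum_tsum_offDiag hp hX
    _ < 1 := ENNReal.tsum_mul_one_sub_lt_one hX hi₀

end ennQSO

theorem tsum_ofReal_eq_one {ι : Type*} {f : ι → ℝ} (hf : ∀ i, 0 ≤ f i) (hsum : HasSum f 1) :
    ∑' i, ENNReal.ofReal (f i) = 1 := by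
  rw [← ENNReal.ofReal_tsum_of_nonneg hf hsum.summable, hsum.tsum_eq, ENNReal.ofReal_one]

theorem QSO_eq_toReal_ennQSO {P : ℕ → ℕ → ℕ → ℝ} (hP : QSOCoef P) {x : ℕ → ℝ}
    (hx : IsSimplexPt x) (k : ℕ) :
    QSO P x k = (ennQSO (fun i j k => .ofReal (P i j k)) (fun i => .ofReal (x i)) k).toReal := by
  have hX := tsum_ofReal_eq_one hx.1 hx.2
  have hrow : ∀ i, ∑' j, ENNReal.ofReal (P i j k) * .ofReal (x i) * .ofReal (x j) ≠ ∞ := by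
    intro i
    refine ne_top_of_le_ne_top (b := .ofReal (x i)) ENNReal.ofReal_ne_top ?_
    calc ∑' j, ENNReal.ofReal (P i j k) * .ofReal (x i) * .ofReal (x j)
        ≤ ∑' j, 1 * .ofReal (x i) * .ofReal (x j) := by
          gcongr with j
          exact tsum_ofReal_eq_one (hP.1 i j) (hP.2.2 i j) ▸ ENNReal.le_tsum k
      _ = .ofReal (x i) := by simp only [one_mul, ENNReal.tsum_mul_left, hX, mul_one]
  rw [ennQSO, ENNReal.tsum_toReal_eq hrow, QSO]
  refine tsum_congr fun i => ?_
  rw [ENNReal.tsum_toReal_eq fun j => by finiteness]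
  refine tsum_congr fun j => ?_
  simp only [ENNReal.toReal_mul, ENNReal.toReal_ofReal (hP.1 i j k),
    ENNReal.toReal_ofReal (hx.1 i), ENNReal.toReal_ofReal (hx.1 j)]

theorem no_fixed_point_in_complement (Pc : ℕ → ℕ → ℕ → ℝ) (hP : QSOCoef Pc)
    (x0 : ℕ → ℝ) (hx0 : IsSimplexPt x0)
    (hsub : support x0 ⊆ Set.univ \ (⋃ k, support (QSO Pc (stdBasis k))))
    (hnt : (support x0).Nontrivial)
    (hdiag : ∀ i c : ℕ, c ∈ Set.univ \ (⋃ k, support (QSO Pc (stdBasis k))) →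
      Pc i i c = 0) :
    (∑' k, Set.indicator (support x0) (QSO Pc x0) k) < 1 ∧ QSO Pc x0 ≠ x0 := by
  obtain ⟨i₀, hi₀⟩ := hnt.nonempty
  have hlt := tsum_indicator_ennQSO_lt_one (A := support x0)
    (fun i j => tsum_ofReal_eq_one (hP.1 i j) (hP.2.2 i j)) (tsum_ofReal_eq_one hx0.1 hx0.2)
    (fun i k hk => by simp [hdiag i k (hsub hk)])
    (i₀ := i₀) (by simpa using (hx0.1 i₀).lt_of_ne' hi₀)
  have hmass : ∑' k, (support x0).indicator (QSO Pc x0) k < 1 := by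
    rw [funext (QSO_eq_toReal_ennQSO hP hx0),
      ← Function.comp_def ENNReal.toReal, Set.indicator_comp_of_zero ENNReal.toReal_zero]
    exact ENNReal.tsum_toReal_lt_one hlt
  refine ⟨hmass, fun hfix => ?_⟩
  rw [hfix, Set.indicator_support, hx0.2.tsum_eq] at hmass
  exact lt_irrefl _ hmass
end
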